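/- Let X, Y be Banach spaces, C ⊆ Y a closed convex pointed cone with nonempty interior, f : X → Y. If x̄ is the unique minimizer of x ↦ D_{−C}(f(x) − f(x̄)) over X, then x̄ is an efficient solution of (X, f). -/

import Mathlib

/-! If `y ∈ -C`, then translating by `y` maps `-C` into itself and maps the complement onto a
superset of itself, because a convex cone is closed under addition. Hence the oriented distance
`D_{-C}` can only decrease along such a translation, so `D_{-C}(f x - f x̄) ≤ D_{-C}(0)` whenever
`f x - f x̄ ∈ -C`; uniqueness of the minimizer then forces `x = x̄`. -/

open Metric

section OrientedDistance

variable {E : Type*} [SeminormedAddCommGroup E]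

noncomputable def orientedDist (S : Set E) (y : E) : ℝ :=
  infDist y S - infDist y Sᶜ

theorem infDist_add_le_of_add_mem {S : Set E} {y : E} (hy : ∀ s ∈ S, s + y ∈ S) (x : E) :
    infDist (x + y) S ≤ infDist x S := by
  rcases S.eq_empty_or_nonempty with rfl | hS
  · simp
  refine (le_infDist hS).2 fun s hs => ?_
  calc infDist (x + y) S ≤ dist (x + y) (s + y) := infDist_le_dist_of_mem (hy s hs)
    _ = dist x s := dist_add_right x s y

theorem infDist_compl_le_of_add_mem {S : Set E} {y : E} (hy : ∀ s ∈ S, s + y ∈ S) (x : E) :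
    infDist x Sᶜ ≤ infDist (x + y) Sᶜ := by
  have hy' : ∀ z ∈ Sᶜ, z + -y ∈ Sᶜ := fun z hz hzy => hz (by simpa using hy _ hzy)
  simpa using infDist_add_le_of_add_mem hy' (x + y)

theorem orientedDist_add_le_of_add_mem {S : Set E} {y : E} (hy : ∀ s ∈ S, s + y ∈ S) (x : E) :
    orientedDist S (x + y) ≤ orientedDist S x :=
  sub_le_sub (infDist_add_le_of_add_mem hy x) (infDist_compl_le_of_add_mem hy x)

end OrientedDistance

theorem Convex.add_mem_of_smul_mem {𝕜 E : Type*} [Field 𝕜] [LinearOrder 𝕜]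
    [IsStrictOrderedRing 𝕜] [AddCommGroup E] [Module 𝕜 E] {C : Set E} (hconv : Convex 𝕜 C)
    (hcone : ∀ t : 𝕜, 0 ≤ t → ∀ y ∈ C, t • y ∈ C) {a b : E} (ha : a ∈ C) (hb : b ∈ C) :
    a + b ∈ C := by
  have hmid : (2⁻¹ : 𝕜) • a + (2⁻¹ : 𝕜) • b ∈ C :=
    hconv ha hb (by positivity) (by positivity) (by norm_num)
  simpa [smul_add, smul_smul] using hcone 2 zero_le_two _ hmid

theorem efficient_of_unique_min_orientedDist_general
    {X Y : Type*}
    [NormedAddCommGroup Y] [NormedSpace ℝ Y]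
    (C : Set Y) (hCconv : Convex ℝ C)
    (hCcone : ∀ t : ℝ, 0 ≤ t → ∀ y ∈ C, t • y ∈ C)
    (hCint : (interior C).Nonempty)
    (f : X → Y) (xbar : X)
    (huniq : ∀ x : X, x ≠ xbar →
      Metric.infDist (f xbar - f xbar) (-C) - Metric.infDist (f xbar - f xbar) ((-C)ᶜ) <
      Metric.infDist (f x - f xbar) (-C) - Metric.infDist (f x - f xbar) ((-C)ᶜ)) :
    {y | ∃ x, y = f x - f xbar} ∩ (-C) = {0} := by
  have hzero : (0 : Y) ∈ -C := by
    obtain ⟨c, hc⟩ := hCint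
    simpa using hCcone 0 le_rfl c (interior_subset hc)
  have hadd : ∀ a ∈ -C, ∀ b ∈ -C, a + b ∈ -C := fun a ha b hb => by
    simpa [add_comm] using hCconv.add_mem_of_smul_mem hCcone ha hb
  ext y
  constructor
  · rintro ⟨⟨x, rfl⟩, hy⟩
    by_contra hne
    have hx : x ≠ xbar := by rintro rfl; exact hne (sub_self _)
    have hlt : orientedDist (-C) 0 < orientedDist (-C) (f x - f xbar) := by
      rw [← sub_self (f xbar)]
      exact huniq x hx
    have hle := orientedDist_add_le_of_add_mem (fun s hs => hadd s hs _ hy) (0 : Y)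
    rw [zero_add] at hle
    exact hle.not_gt hlt
  · rintro rfl
    exact ⟨⟨xbar, (sub_self _).symm⟩, hzero⟩

/-- If `xbar` is the unique minimizer of `x ↦ D_{-C}(f x - f xbar)`, then
`xbar` is an efficient solution of `(X, f)`. -/
theorem efficient_of_unique_min_orientedDist
    {X Y : Type*} [NormedAddCommGroup X] [NormedSpace ℝ X] [CompleteSpace X]
    [NormedAddCommGroup Y] [NormedSpace ℝ Y] [CompleteSpace Y]
    (C : Set Y) (hCclosed : IsClosed C) (hCconv : Convex ℝ C)
    (hCcone : ∀ t : ℝ, 0 ≤ t → ∀ y ∈ C, t • y ∈ C)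
    (hCpointed : C ∩ (-C) = {0}) (hCint : (interior C).Nonempty)
    (f : X → Y) (xbar : X)
    (huniq : ∀ x : X, x ≠ xbar →
      Metric.infDist (f xbar - f xbar) (-C) - Metric.infDist (f xbar - f xbar) ((-C)ᶜ) <
      Metric.infDist (f x - f xbar) (-C) - Metric.infDist (f x - f xbar) ((-C)ᶜ)) :
    {y | ∃ x, y = f x - f xbar} ∩ (-C) = {0} :=
  efficient_of_unique_min_orientedDist_general C hCconv hCcone hCint f xbar huniq
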